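/- Substitution lemma for the affine λ¢: if r reduces to s with probability p in one step, and t is typable in the affine type system (so each variable occurs free at most once in t), then t[r/x] reduces to t[s/x] with probability p in at most one step (exactly one step if x occurs free in t, and t[r/x] = t[s/x] if x does not occur in t). -/

import Mathlib

/-- Terms of λ¢ (de Bruijn): variables, abstraction, application,
    booleans `one`/`zero`, if-then-else, and a coin. -/
inductive Tm : Type
  | var : Nat → Tm
  | lam : Tm → Tm
  | app : Tm → Tm → Tm
  | one : Tm
  | zero : Tm
  | ite : Tm → Tm → Tm → Tm
  | coin : Tm
  deriving DecidableEq

/-- Lifting of de Bruijn indices (indices ≥ d are incremented). -/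
def lift (d : Nat) : Tm → Tm
  | .var n => if n < d then .var n else .var (n+1)
  | .lam t => .lam (lift (d+1) t)
  | .app t u => .app (lift d t) (lift d u)
  | .one => .one
  | .zero => .zero
  | .ite c a b => .ite (lift d c) (lift d a) (lift d b)
  | .coin => .coin

/-- Capture-avoiding substitution `t[s/k]` (de Bruijn). -/
def subst : Tm → Nat → Tm → Tm
  | .var n, k, s => if n = k then s else if k < n then .var (n-1) else .var n
  | .lam t, k, s => .lam (subst t (k+1) (lift 0 s))
  | .app t u, k, s => .app (subst t k s) (subst u k s)
  | .one, _, _ => .one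
  | .zero, _, _ => .zero
  | .ite c a b, k, s => .ite (subst c k s) (subst a k s) (subst b k s)
  | .coin, _, _ => .coin

/-- One-step probabilistic reduction `t →_p r` of λ¢:
    β, if-rules (probability 1), coin toss (probability 1/2 each),
    closed under all contexts. -/
inductive Step : Tm → ℚ → Tm → Prop
  | beta (t r) : Step (.app (.lam t) r) 1 (subst t 0 r)
  | iteOne (a b) : Step (.ite .one a b) 1 a
  | iteZero (a b) : Step (.ite .zero a b) 1 b
  | coinOne : Step .coin (1/2) .one
  | coinZero : Step .coin (1/2) .zero
  | lam {t p t'} : Step t p t' → Step (.lam t) p (.lam t')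
  | appL {t p t'} (u) : Step t p t' → Step (.app t u) p (.app t' u)
  | appR {u p u'} (t) : Step u p u' → Step (.app t u) p (.app t u')
  | iteC {c p c'} (a b) : Step c p c' → Step (.ite c a b) p (.ite c' a b)
  | iteA {a p a'} (c b) : Step a p a' → Step (.ite c a b) p (.ite c a' b)
  | iteB {b p b'} (c a) : Step b p b' → Step (.ite c a b) p (.ite c a b')

/-- A term is normal if no probabilistic step applies. -/
def NormalTm (t : Tm) : Prop := ¬ ∃ p r, Step t p r

/-- (Sub)probability distributions over terms, as finitely supported maps. -/
abbrev PDist := Tm →₀ ℚ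

/-- Contraction of one redex occurrence of a term, producing the
    distribution of its results: deterministic rules give a Dirac
    distribution, a coin redex splits 1/2–1/2; closed under contexts. -/
inductive TStep : Tm → PDist → Prop
  | beta (t r) : TStep (.app (.lam t) r) (Finsupp.single (subst t 0 r) 1)
  | iteOne (a b) : TStep (.ite .one a b) (Finsupp.single a 1)
  | iteZero (a b) : TStep (.ite .zero a b) (Finsupp.single b 1)
  | coin : TStep .coin (Finsupp.single Tm.one (1/2) + Finsupp.single Tm.zero (1/2))
  | lam {t D} : TStep t D → TStep (.lam t) (D.mapDomain .lam)
  | appL {t D} (u) : TStep t D → TStep (.app t u) (D.mapDomain (fun s => .app s u))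
  | appR {u D} (t) : TStep u D → TStep (.app t u) (D.mapDomain (fun s => .app t s))
  | iteC {c D} (a b) : TStep c D → TStep (.ite c a b) (D.mapDomain (fun s => .ite s a b))
  | iteA {a D} (c b) : TStep a D → TStep (.ite c a b) (D.mapDomain (fun s => .ite c s b))
  | iteB {b D} (c a) : TStep b D → TStep (.ite c a b) (D.mapDomain (fun s => .ite c a s))

/-- One distribution-reduction step: pick a term `t` in the support,
    contract one redex occurrence of `t` and redistribute its probability
    mass accordingly (equal results are merged by the `Finsupp` addition). -/
def DStep (D D' : PDist) : Prop :=
  ∃ t E, D t ≠ 0 ∧ TStep t E ∧ D' = D.erase t + D t • E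

/-- Multistep distribution reduction. -/
def DSteps : PDist → PDist → Prop := Relation.ReflTransGen DStep

/-- A distribution is normal when every term in its support is normal. -/
def NormalDist (D : PDist) : Prop := ∀ t ∈ D.support, NormalTm t

/-- Simple types: booleans and arrows. -/
inductive Ty : Type
  | bool : Ty
  | arrow : Ty → Ty → Ty
  deriving DecidableEq

/-- Typing contexts for the (sub-)affine systems: a partial assignment of
    types to de Bruijn indices. -/
abbrev Ctx := Nat → Option Ty

/-- Extend a context with a (possibly absent) type for the new index 0. -/
def Ctx.cons (A : Option Ty) (Γ : Ctx) : Ctx := fun n =>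
  match n with
  | 0 => A
  | m+1 => Γ m

/-- Disjointness of contexts. -/
def Ctx.disj (Γ Δ : Ctx) : Prop := ∀ n, Γ n = none ∨ Δ n = none

/-- Union of (disjoint) contexts. -/
def Ctx.union (Γ Δ : Ctx) : Ctx := fun n => (Γ n).orElse (fun _ => Δ n)

/-- The empty context. -/
def Ctx.empty : Ctx := fun _ => none

/-- Affine type system for λ¢ (Table 3): disjoint contexts in the
    application rule and pairwise disjoint contexts in the if rule;
    axioms allow weakening. -/
inductive AffTy : Ctx → Tm → Ty → Prop
  | var {Γ n A} : Γ n = some A → AffTy Γ (.var n) A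
  | lam {Γ t A B} : AffTy (Ctx.cons (some A) Γ) t B → AffTy Γ (.lam t) (.arrow A B)
  | app {Γ Δ t u A B} : Ctx.disj Γ Δ →
      AffTy Γ t (.arrow A B) → AffTy Δ u A → AffTy (Ctx.union Γ Δ) (.app t u) B
  | one {Γ} : AffTy Γ .one .bool
  | zero {Γ} : AffTy Γ .zero .bool
  | coin {Γ} : AffTy Γ .coin .bool
  | ite {Γ Δ₁ Δ₂ c a b A} : Ctx.disj Γ Δ₁ → Ctx.disj Γ Δ₂ → Ctx.disj Δ₁ Δ₂ →
      AffTy Γ c .bool → AffTy Δ₁ a A → AffTy Δ₂ b A →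
      AffTy (Ctx.union Γ (Ctx.union Δ₁ Δ₂)) (.ite c a b) A

/-- Number of free occurrences of the de Bruijn variable `k` in a term. -/
def count : Nat → Tm → Nat
  | k, .var n => if n = k then 1 else 0
  | k, .lam t => count (k+1) t
  | k, .app t u => count k t + count k u
  | k, .ite c a b => count k c + count k a + count k b
  | _, .one => 0
  | _, .zero => 0
  | _, .coin => 0

/-! Affine typability bounds the number of free occurrences of every variable by one. If `x` does
not occur in `t`, then `t[r/x]` does not depend on `r`; if it occurs exactly once, the step
`r →_p s` is performed at that single occurrence, under the context `t` builds around it (below a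
binder the step is transported along the lifting of `r` and `s`, which commutes with reduction). -/

theorem Ctx.union_eq_none {Γ Δ : Ctx} {x : Nat} :
    Ctx.union Γ Δ x = none ↔ Γ x = none ∧ Δ x = none := by
  cases h : Γ x <;> simp [Ctx.union, Option.orElse, h]

theorem lift_lift_of_le (s : Tm) {e d : Nat} (h : e ≤ d) :
    lift (d+1) (lift e s) = lift e (lift d s) := by
  induction s generalizing e d with
  | var n => by_cases n < e <;> by_cases n < d <;> simp [lift, *] <;> omega
  | lam t ih => simp [lift, ih (Nat.succ_le_succ h)]
  | app t u iht ihu => simp [lift, iht h, ihu h]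
  | ite c a b ihc iha ihb => simp [lift, ihc h, iha h, ihb h]
  | one | zero | coin => rfl

theorem lift_subst_of_le (t : Tm) {k d : Nat} (s : Tm) (h : k ≤ d) :
    lift d (subst t k s) = subst (lift (d+1) t) k (lift d s) := by
  induction t generalizing k d s with
  | var n =>
    simp only [subst, lift]
    split_ifs <;> simp only [subst, lift] <;> split_ifs <;> first | rfl | omega | (congr 1; omega)
  | lam t ih =>
    simp only [subst, lift, ih (lift 0 s) (Nat.succ_le_succ h), lift_lift_of_le s (Nat.zero_le d)]
  | app t u iht ihu => simp [subst, lift, iht s h, ihu s h]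
  | ite c a b ihc iha ihb => simp [subst, lift, ihc s h, iha s h, ihb s h]
  | one | zero | coin => rfl

theorem Step.lift {r s : Tm} {p : ℚ} (h : Step r p s) (d : Nat) :
    Step (lift d r) p (lift d s) := by
  induction h generalizing d with
  | beta t r =>
    simp only [_root_.lift]
    rw [lift_subst_of_le t r (Nat.zero_le d)]
    exact .beta _ _
  | iteOne => exact .iteOne _ _
  | iteZero => exact .iteZero _ _
  | coinOne => exact .coinOne
  | coinZero => exact .coinZero
  | lam _ ih => exact .lam (ih (d+1))
  | appL _ _ ih => exact .appL _ (ih d)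
  | appR _ _ ih => exact .appR _ (ih d)
  | iteC _ _ _ ih => exact .iteC _ _ (ih d)
  | iteA _ _ _ ih => exact .iteA _ _ (ih d)
  | iteB _ _ _ ih => exact .iteB _ _ (ih d)

theorem subst_eq_subst_of_count_eq_zero {t : Tm} {x : Nat} (h : count x t = 0) (r s : Tm) :
    subst t x r = subst t x s := by
  induction t generalizing x r s with
  | var n => simp_all [count, subst]
  | lam t ih => rw [subst, subst, ih h]
  | app t u iht ihu =>
    simp only [count, Nat.add_eq_zero_iff] at h
    rw [subst, subst, iht h.1, ihu h.2]
  | ite c a b ihc iha ihb =>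
    simp only [count, Nat.add_eq_zero_iff] at h
    rw [subst, subst, ihc h.1.1, iha h.1.2, ihb h.2]
  | one | zero | coin => rfl

theorem Step.subst_of_count_eq_one {t r s : Tm} {p : ℚ} {x : Nat} (h : count x t = 1)
    (hr : Step r p s) : Step (subst t x r) p (subst t x s) := by
  induction t generalizing x r s with
  | var n =>
    have hn : n = x := by by_contra hn; simp [count, hn] at h
    simpa [subst, hn] using hr
  | lam t ih => exact .lam (ih h (hr.lift 0))
  | app t u iht ihu =>
    simp only [count] at h
    rcases Nat.eq_zero_or_pos (count x u) with hu | hu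
    · rw [subst, subst, subst_eq_subst_of_count_eq_zero hu r s]
      exact .appL _ (iht (by omega) hr)
    · rw [subst, subst, subst_eq_subst_of_count_eq_zero (t := t) (by omega) r s]
      exact .appR _ (ihu (by omega) hr)
  | ite c a b ihc iha ihb =>
    simp only [count] at h
    rcases Nat.eq_zero_or_pos (count x c) with hc | hc
    · rcases Nat.eq_zero_or_pos (count x a) with ha | ha
      · rw [subst, subst, subst_eq_subst_of_count_eq_zero hc r s,
          subst_eq_subst_of_count_eq_zero ha r s]
        exact .iteB _ _ (ihb (by omega) hr)
      · rw [subst, subst, subst_eq_subst_of_count_eq_zero hc r s,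
          subst_eq_subst_of_count_eq_zero (t := b) (by omega) r s]
        exact .iteA _ _ (iha (by omega) hr)
    · rw [subst, subst, subst_eq_subst_of_count_eq_zero (t := a) (by omega) r s,
        subst_eq_subst_of_count_eq_zero (t := b) (by omega) r s]
      exact .iteC _ _ (ihc (by omega) hr)
  | one | zero | coin => simp [count] at h

theorem AffTy.count_eq_zero_of_eq_none {Γ : Ctx} {t : Tm} {A : Ty} (ht : AffTy Γ t A) {x : Nat}
    (hx : Γ x = none) : count x t = 0 := by
  induction ht generalizing x with
  | @var _ n _ h =>
    have : n ≠ x := fun he => by simp [he, hx] at h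
    simp [count, this]
  | lam _ ih => exact ih hx
  | app _ _ _ iht ihu =>
    obtain ⟨hΓ, hΔ⟩ := Ctx.union_eq_none.1 hx
    simp [count, iht hΓ, ihu hΔ]
  | ite _ _ _ _ _ _ ihc iha ihb =>
    obtain ⟨hΓ, hΔ⟩ := Ctx.union_eq_none.1 hx
    obtain ⟨hΔ₁, hΔ₂⟩ := Ctx.union_eq_none.1 hΔ
    simp [count, ihc hΓ, iha hΔ₁, ihb hΔ₂]
  | one | zero | coin => rfl

theorem AffTy.count_le_one {Γ : Ctx} {t : Tm} {A : Ty} (ht : AffTy Γ t A) (x : Nat) :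
    count x t ≤ 1 := by
  induction ht generalizing x with
  | var => simp only [count]; split <;> omega
  | lam _ ih => exact ih (x+1)
  | app hdisj ht hu iht ihu =>
    have := iht x; have := ihu x
    rcases hdisj x with h | h
    · simp [count, ht.count_eq_zero_of_eq_none h, *]
    · simp [count, hu.count_eq_zero_of_eq_none h, *]
  | ite hΓΔ₁ hΓΔ₂ hΔ₁Δ₂ hc ha hb ihc iha ihb =>
    have := ihc x; have := iha x; have := ihb x
    simp only [count]
    rcases hΓΔ₁ x with h₁ | h₁ <;> rcases hΓΔ₂ x with h₂ | h₂ <;> rcases hΔ₁Δ₂ x with h₃ | h₃ <;>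
      simp_all [hc.count_eq_zero_of_eq_none, ha.count_eq_zero_of_eq_none,
        hb.count_eq_zero_of_eq_none]
  | one | zero | coin => simp [count]

/-- substitution lemma for the affine λ¢: if `r →_p s` in one
    step and `t` is affinely typable, then `t[r/x]` reduces to `t[s/x]`
    with probability `p` in at most one step — exactly one step if `x`
    occurs (once) free in `t`, and the two terms are equal if `x` does not
    occur in `t`. -/
theorem affine_substitution_lemma {Γ : Ctx} {t : Tm} {A : Ty}
    (ht : AffTy Γ t A) {r s : Tm} {p : ℚ} (x : Nat) (hr : Step r p s) :
    (count x t = 0 ∧ subst t x r = subst t x s) ∨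
    (count x t = 1 ∧ Step (subst t x r) p (subst t x s)) := by
  rcases Nat.le_one_iff_eq_zero_or_eq_one.1 (ht.count_le_one x) with h | h
  · exact .inl ⟨h, subst_eq_subst_of_count_eq_zero h r s⟩
  · exact .inr ⟨h, hr.subst_of_count_eq_one h⟩
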